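/- arXiv:2201.09230 — 7 statements merged into one kernel-verified Lean document; each statement's English description precedes it below -/
import Mathlib

section
/- Let r, k, c, m > 0. The set of solutions (x, y) with x ≥ 0 and y ≥ 0 of the equilibrium equations rx/(1+ky) − cxy = 0 and cxy² − my = 0 consists of exactly two points: the origin (0, 0) and the positive point (x₁, y₁) with x₁ = 2km/(−c + √(c² + 4crk)) and y₁ = (−c + √(c² + 4crk))/(2ck); moreover x₁ > 0 and y₁ > 0. -/
/-!
At an equilibrium with `x = 0` the second equation forces `y = 0`. Otherwise dividing the first
equation by `x` leaves the quadratic `c k y² + c y = r`, which is strictly increasing on `y ≥ 0`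
and so has `y₁` as its only nonnegative root; the second equation then reads `c x y₁ = m`.
-/

open Real

section Equilibria

variable {r k c m : ℝ}

lemma lt_sqrt_sq_add_mul (hr : 0 < r) (hk : 0 < k) (hc : 0 < c) :
    c < √(c ^ 2 + 4 * c * r * k) :=
  (Real.lt_sqrt hc.le).2 (by nlinarith [mul_pos (mul_pos hc hr) hk])

lemma quadratic_eq_of_eq_root (hr : 0 < r) (hk : 0 < k) (hc : 0 < c) {y : ℝ}
    (hy : y = (-c + √(c ^ 2 + 4 * c * r * k)) / (2 * c * k)) :
    c * k * y ^ 2 + c * y = r := by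
  have hsq : √(c ^ 2 + 4 * c * r * k) ^ 2 = c ^ 2 + 4 * c * r * k :=
    Real.sq_sqrt (by positivity)
  generalize √(c ^ 2 + 4 * c * r * k) = s at hy hsq
  subst hy
  field_simp
  linear_combination hsq

lemma eq_of_quadratic_eq (hk : 0 ≤ k) (hc : 0 < c) {y y' : ℝ} (hy : 0 ≤ y) (hy' : 0 ≤ y')
    (h : c * k * y ^ 2 + c * y = c * k * y' ^ 2 + c * y') : y = y' := by
  have hfac : (y - y') * (c * k * (y + y') + c) = 0 := by linear_combination h
  have hpos : 0 < c * k * (y + y') + c := by positivity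
  linarith [(mul_eq_zero.1 hfac).resolve_right hpos.ne']

lemma nonneg_equilibrium_iff (hr : 0 < r) (hk : 0 ≤ k) (hc : 0 < c) (hm : 0 < m) {x y : ℝ} :
    (0 ≤ x ∧ 0 ≤ y ∧ r * x / (1 + k * y) - c * x * y = 0 ∧ c * x * y ^ 2 - m * y = 0) ↔
      (x = 0 ∧ y = 0) ∨ (0 < y ∧ c * k * y ^ 2 + c * y = r ∧ c * x * y = m) := by
  constructor
  · rintro ⟨hx, hy, h₁, h₂⟩
    have hky : 0 < 1 + k * y := by positivity
    rcases hx.eq_or_lt with rfl | hx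
    · exact .inl ⟨rfl, by nlinarith⟩
    have hfac : x * (c * k * y ^ 2 + c * y - r) = 0 := by
      field_simp at h₁
      linear_combination -h₁
    have hquad := (mul_eq_zero.1 hfac).resolve_left hx.ne'
    have hy : 0 < y := hy.lt_of_ne fun h ↦ by subst h; linarith
    have hxy : y * (c * x * y - m) = 0 := by linear_combination h₂
    exact .inr ⟨hy, by linarith, by linarith [(mul_eq_zero.1 hxy).resolve_left hy.ne']⟩
  · rintro (⟨rfl, rfl⟩ | ⟨hy, hquad, hxy⟩)
    · simp
    have hx : 0 < x :=
      pos_of_mul_pos_right (pos_of_mul_pos_left (hxy ▸ hm : 0 < c * x * y) hy.le) hc.le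
    have hky : 1 + k * y ≠ 0 := by positivity
    refine ⟨hx.le, hy.le, ?_, by linear_combination y * hxy⟩
    rw [sub_eq_zero, div_eq_iff hky]
    linear_combination -x * hquad

end Equilibria

/-- The set of nonnegative equilibria of the microbial pesticide model with
inhibiting effect `dx/dt = rx/(1+ky) - cxy`, `dy/dt = cxy² - my` consists of
exactly the origin and the positive point `(x₁, y₁)`; moreover `x₁, y₁ > 0`. -/
theorem stmt0 (r k c m : ℝ) (hr : 0 < r) (hk : 0 < k) (hc : 0 < c) (hm : 0 < m)
    (x₁ y₁ : ℝ)
    (hx₁ : x₁ = 2 * k * m / (-c + Real.sqrt (c ^ 2 + 4 * c * r * k)))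
    (hy₁ : y₁ = (-c + Real.sqrt (c ^ 2 + 4 * c * r * k)) / (2 * c * k)) :
    {p : ℝ × ℝ | 0 ≤ p.1 ∧ 0 ≤ p.2 ∧
        r * p.1 / (1 + k * p.2) - c * p.1 * p.2 = 0 ∧
        c * p.1 * p.2 ^ 2 - m * p.2 = 0} = {(0, 0), (x₁, y₁)} ∧
      0 < x₁ ∧ 0 < y₁ := by
  have hsqrt := lt_sqrt_sq_add_mul hr hk hc
  have hy₁pos : 0 < y₁ := by rw [hy₁]; exact div_pos (by linarith) (by positivity)
  have hx₁pos : 0 < x₁ := by rw [hx₁]; exact div_pos (by positivity) (by linarith)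
  have hquad := quadratic_eq_of_eq_root hr hk hc hy₁
  have hxy : c * x₁ * y₁ = m := by
    have hden : -c + √(c ^ 2 + 4 * c * r * k) ≠ 0 := by linarith
    rw [hx₁, hy₁]
    generalize -c + √(c ^ 2 + 4 * c * r * k) = d at hden
    field_simp
  refine ⟨?_, hx₁pos, hy₁pos⟩
  ext ⟨x, y⟩
  simp only [Set.mem_ofPred_eq, Set.mem_insert_iff, Set.mem_singleton_iff, Prod.mk.injEq,
    nonneg_equilibrium_iff hr hk.le hc hm]
  refine or_congr_right ⟨fun ⟨hy, hq, hcxy⟩ ↦ ?_, fun ⟨hx, hy⟩ ↦ hx ▸ hy ▸ ⟨hy₁pos, hquad, hxy⟩⟩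
  obtain rfl : y = y₁ := eq_of_quadratic_eq hk.le hc hy.le hy₁pos.le (hq.trans hquad.symm)
  exact ⟨mul_right_cancel₀ hy₁pos.ne' (mul_left_cancel₀ hc.ne' (by linear_combination hcxy - hxy)), rfl⟩
end

section
/- Let r, k, c, m > 0 and let x₁ = 2km/(−c + √(c² + 4crk)), y₁ = (−c + √(c² + 4crk))/(2ck). Then the Jacobian matrix of the vector field (rx/(1+ky) − cxy, cxy² − my) at (x₁, y₁) equals [[0, −rkx₁/(1+ky₁)² − cx₁], [cy₁², m]]; its trace is m > 0 and its determinant D = cy₁²(rkx₁/(1+ky₁)² + cx₁) is strictly positive, and consequently every complex root λ of the characteristic polynomial λ² − mλ + D has strictly positive real part. -/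
/-!
Since `y₁` is the positive root of `c k y² + c y - r` and `x₁ = m / (c y₁)`, the equilibrium
satisfies `r / (1 + k y₁) = c y₁` and `c x₁ y₁ = m`. Hence the Jacobian has
diagonal `(0, m)` and a negative upper-right entry, so its trace `m` and determinant `D` are
positive, and a root of `λ² - mλ + D` is either real (then positive, as `λ² + D > 0 ≥ mλ`
otherwise) or non-real with real part `m / 2`.
-/

open ContinuousLinearMap

noncomputable def pesticideField (r k c m : ℝ) (p : ℝ × ℝ) : ℝ × ℝ :=
  (r * p.1 / (1 + k * p.2) - c * p.1 * p.2, c * p.1 * p.2 ^ 2 - m * p.2)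

theorem fderiv_pesticideField_apply (r k c m x y : ℝ) (hy : 1 + k * y ≠ 0) (v : ℝ × ℝ) :
    fderiv ℝ (pesticideField r k c m) (x, y) v =
      ((r / (1 + k * y) - c * y) * v.1 + (-(r * k * x / (1 + k * y) ^ 2) - c * x) * v.2,
        c * y ^ 2 * v.1 + (2 * c * x * y - m) * v.2) := by
  have hfst : HasFDerivAt (fun p : ℝ × ℝ => p.1) (fst ℝ ℝ ℝ) (x, y) := hasFDerivAt_fst
  have hsnd : HasFDerivAt (fun p : ℝ × ℝ => p.2) (snd ℝ ℝ ℝ) (x, y) := hasFDerivAt_snd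
  have hinv : HasFDerivAt (fun p : ℝ × ℝ => (1 + k * p.2)⁻¹)
      (-((1 + k * y) ^ 2)⁻¹ • k • snd ℝ ℝ ℝ) (x, y) :=
    (hasDerivAt_inv hy).comp_hasFDerivAt (x, y) ((hsnd.const_mul k).const_add 1)
  have hF : HasFDerivAt (pesticideField r k c m) _ (x, y) :=
    (((hfst.const_mul r).fun_mul hinv).fun_sub ((hfst.const_mul c).fun_mul hsnd)).prodMk
      (((hfst.const_mul c).fun_mul (hsnd.pow 2)).fun_sub (hsnd.const_mul m))
  rw [hF.fderiv]
  simp only [Nat.add_one_sub_one, pow_one, nsmul_eq_mul, Nat.cast_ofNat, prod_apply, sub_apply,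
    add_apply, smul_apply, coe_fst', coe_snd', smul_eq_mul, neg_mul, mul_neg, Prod.mk.injEq]
  constructor
  · field_simp
    ring
  · ring

theorem lt_sqrt_sq_add (c : ℝ) {d : ℝ} (hd : 0 < d) : c < √(c ^ 2 + d) :=
  calc c ≤ |c| := le_abs_self c
    _ = √(c ^ 2) := (Real.sqrt_sq_eq_abs c).symm
    _ < √(c ^ 2 + d) := Real.sqrt_lt_sqrt (sq_nonneg c) (by linarith)

theorem mul_mul_one_add_eq_of_eq_quadratic_root {r k c s y : ℝ} (hk : k ≠ 0) (hc : c ≠ 0)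
    (hs : s ^ 2 = c ^ 2 + 4 * c * r * k) (hy : y = (-c + s) / (2 * c * k)) :
    c * y * (1 + k * y) = r := by
  rw [hy]
  field_simp
  linear_combination hs

theorem re_pos_of_sq_sub_mul_add_eq_zero {T D : ℝ} (hT : 0 < T) (hD : 0 < D) {z : ℂ}
    (hz : z ^ 2 - T * z + D = 0) : 0 < z.re := by
  have hre : z.re ^ 2 - z.im ^ 2 - T * z.re + D = 0 := by
    simpa [sq] using congrArg Complex.re hz
  have him : z.im * (2 * z.re - T) = 0 := by
    have := congrArg Complex.im hz
    simp only [sq, Complex.add_im, Complex.sub_im, Complex.mul_im, Complex.ofReal_re,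
      Complex.ofReal_im, zero_mul, add_zero, Complex.zero_im] at this
    linear_combination this
  rcases mul_eq_zero.mp him with hreal | hcenter
  · nlinarith [sq_nonneg z.re]
  · linarith

/-- At the positive equilibrium `(x₁, y₁)`, the Jacobian of the vector field
`(rx/(1+ky) - cxy, cxy² - my)` equals `[[0, -rkx₁/(1+ky₁)² - cx₁], [cy₁², m]]`,
its trace is `m > 0`, its determinant `D = cy₁²(rkx₁/(1+ky₁)² + cx₁)` is
positive, and every complex root of `λ² - mλ + D` has positive real part. -/
theorem stmt2 (r k c m : ℝ) (hr : 0 < r) (hk : 0 < k) (hc : 0 < c) (hm : 0 < m)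
    (x₁ y₁ : ℝ)
    (hx₁ : x₁ = 2 * k * m / (-c + Real.sqrt (c ^ 2 + 4 * c * r * k)))
    (hy₁ : y₁ = (-c + Real.sqrt (c ^ 2 + 4 * c * r * k)) / (2 * c * k)) :
    (∀ v : ℝ × ℝ,
        fderiv ℝ (fun p : ℝ × ℝ =>
          (r * p.1 / (1 + k * p.2) - c * p.1 * p.2,
            c * p.1 * p.2 ^ 2 - m * p.2)) (x₁, y₁) v
          = (0 * v.1 + (-(r * k * x₁ / (1 + k * y₁) ^ 2) - c * x₁) * v.2,
              c * y₁ ^ 2 * v.1 + m * v.2)) ∧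
      0 < m ∧
      0 < c * y₁ ^ 2 * (r * k * x₁ / (1 + k * y₁) ^ 2 + c * x₁) ∧
      ∀ lam : ℂ,
        lam ^ 2 - (m : ℂ) * lam
            + (c * y₁ ^ 2 * (r * k * x₁ / (1 + k * y₁) ^ 2 + c * x₁) : ℝ) = 0 →
          0 < lam.re := by
  set s := √(c ^ 2 + 4 * c * r * k)
  have hs : 0 < -c + s := by linarith [lt_sqrt_sq_add c (by positivity : 0 < 4 * c * r * k)]
  have hy : 0 < y₁ := hy₁ ▸ by positivity
  have hx : 0 < x₁ := hx₁ ▸ by positivity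
  have hprey : r / (1 + k * y₁) = c * y₁ := by
    rw [div_eq_iff (by positivity)]
    exact (mul_mul_one_add_eq_of_eq_quadratic_root hk.ne' hc.ne'
      (Real.sq_sqrt (by positivity)) hy₁).symm
  have hpredator : c * x₁ * y₁ = m := by
    have hs_ne := hs.ne'
    rw [hx₁, hy₁]
    field_simp
  have hdet : 0 < c * y₁ ^ 2 * (r * k * x₁ / (1 + k * y₁) ^ 2 + c * x₁) := by positivity
  refine ⟨fun v => ?_, hm, hdet, fun lam hlam => re_pos_of_sq_sub_mul_add_eq_zero hm hdet hlam⟩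
  change fderiv ℝ (pesticideField r k c m) (x₁, y₁) v = _
  rw [fderiv_pesticideField_apply r k c m x₁ y₁ (by positivity), hprey]
  refine Prod.ext ?_ ?_
  · ring
  · linear_combination 2 * v.2 * hpredator
end

section
/- Let r, k, c, m > 0. Define, for x > 0 and y > 0, P(x, y) = rx/(1+ky) − cxy, Q(x, y) = cxy² − my, and the Dulac function B(x, y) = 1/(xy). Then at every point (x, y) of the open first quadrant, ∂(BP)/∂x + ∂(BQ)/∂y = c > 0; that is, the divergence of the field (BP, BQ) is the positive constant c. -/
/-- Dulac computation: with `P(x,y) = rx/(1+ky) - cxy`, `Q(x,y) = cxy² - my`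
and Dulac function `B(x,y) = 1/(xy)`, at every point of the open first
quadrant `∂(BP)/∂x + ∂(BQ)/∂y = c > 0`. -/
theorem stmt3 (r k c m : ℝ) (hr : 0 < r) (hk : 0 < k) (hc : 0 < c) (hm : 0 < m) :
    ∀ x y : ℝ, 0 < x → 0 < y →
      deriv (fun s : ℝ => (1 / (s * y)) * (r * s / (1 + k * y) - c * s * y)) x
        + deriv (fun s : ℝ => (1 / (x * s)) * (c * x * s ^ 2 - m * s)) y = c
      ∧ 0 < c := by
  intro x y hx hy
  refine ⟨?_, hc⟩
  have hky : (1 : ℝ) + k * y ≠ 0 := by positivity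
  have h1 : deriv (fun s : ℝ => (1 / (s * y)) * (r * s / (1 + k * y) - c * s * y)) x = 0 := by
    have heq : (fun s : ℝ => (1 / (s * y)) * (r * s / (1 + k * y) - c * s * y))
        =ᶠ[nhds x] fun _ : ℝ => r / (y * (1 + k * y)) - c := by
      filter_upwards [isOpen_Ioi.mem_nhds hx] with s hs
      have hs0 : (s : ℝ) ≠ 0 := ne_of_gt hs
      field_simp
    rw [heq.deriv_eq]
    exact deriv_const _ _
  have h2 : deriv (fun s : ℝ => (1 / (x * s)) * (c * x * s ^ 2 - m * s)) y = c := by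
    have heq : (fun s : ℝ => (1 / (x * s)) * (c * x * s ^ 2 - m * s))
        =ᶠ[nhds y] fun s : ℝ => c * s - m / x := by
      filter_upwards [isOpen_Ioi.mem_nhds hy] with s hs
      have hs0 : (s : ℝ) ≠ 0 := ne_of_gt hs
      field_simp
    rw [heq.deriv_eq]
    have : HasDerivAt (fun s : ℝ => c * s - m / x) c y := by
      simpa using ((hasDerivAt_id y).const_mul c).sub_const (m / x)
    exact this.deriv
  rw [h1, h2, zero_add]
end

section
/- Let k, m, u > 0 and set y₃ = (√(1+4k) − 1)/(2k) and u₀ = m·y₃. Consider the equilibrium equations x/(1+ky) − xy = 0 and xy² − my + u = 0. (i) The point (0, u/m) is always a solution. (ii) If u < u₀, there is exactly one solution with x > 0, y > 0, namely (x₃, y₃) with x₃ = (m·y₃ − u)/y₃², and x₃ > 0. (iii) If u ≥ u₀, there is no solution with x > 0, y > 0. -/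
/-! The first equation forces `x = 0` or `k y² + y - 1 = 0`, whose only positive root is `y₃`.
On the branch `y = y₃` the second equation reads `x y₃² = m y₃ - u = u₀ - u`, which has a
positive solution `x` exactly when `u < u₀`, and then only `x₃`. -/

lemma pos_and_root_of_quadratic_formula {k y : ℝ} (hk : 0 < k)
    (hy : y = (Real.sqrt (1 + 4 * k) - 1) / (2 * k)) : 0 < y ∧ k * y ^ 2 + y - 1 = 0 := by
  have hsq : Real.sqrt (1 + 4 * k) ^ 2 = 1 + 4 * k := Real.sq_sqrt (by linarith)
  have hone : 1 < Real.sqrt (1 + 4 * k) := by nlinarith [Real.sqrt_nonneg (1 + 4 * k)]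
  refine ⟨hy ▸ div_pos (by linarith) (by linarith), ?_⟩
  generalize Real.sqrt (1 + 4 * k) = s at hsq hy
  have hquad : k * y ^ 2 + y - 1 = (s ^ 2 - (1 + 4 * k)) / (4 * k) := by
    subst hy; field_simp; ring
  rw [hquad, hsq, sub_self, zero_div]

lemma eq_of_pos_of_mul_sq_add_self_eq {k y z : ℝ} (hk : 0 ≤ k) (hy : 0 < y) (hz : 0 < z)
    (h : k * y ^ 2 + y = k * z ^ 2 + z) : y = z := by
  have hfactor : (y - z) * (k * (y + z) + 1) = 0 := by linear_combination h
  have hpos : 0 < k * (y + z) + 1 := by positivity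
  linarith [(mul_eq_zero.1 hfactor).resolve_right hpos.ne']

lemma div_one_add_mul_sub_mul_eq_zero_iff {k x y : ℝ} (hx : x ≠ 0) (hy : 1 + k * y ≠ 0) :
    x / (1 + k * y) - x * y = 0 ↔ k * y ^ 2 + y - 1 = 0 := by
  rw [div_sub' hy, div_eq_zero_iff, or_iff_left hy,
    show x - (1 + k * y) * (x * y) = -x * (k * y ^ 2 + y - 1) by ring,
    mul_eq_zero, or_iff_right (neg_ne_zero.2 hx)]

theorem stmt5_general (k m u : ℝ) (hk : 0 < k) (hm : 0 < m)
    (y₃ u₀ x₃ : ℝ)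
    (hy₃ : y₃ = (Real.sqrt (1 + 4 * k) - 1) / (2 * k))
    (hu₀ : u₀ = m * y₃)
    (hx₃ : x₃ = (m * y₃ - u) / y₃ ^ 2) :
    ((0 : ℝ) / (1 + k * (u / m)) - 0 * (u / m) = 0 ∧
        0 * (u / m) ^ 2 - m * (u / m) + u = 0) ∧
      (u < u₀ →
        0 < x₃ ∧ 0 < y₃ ∧
          x₃ / (1 + k * y₃) - x₃ * y₃ = 0 ∧
          x₃ * y₃ ^ 2 - m * y₃ + u = 0 ∧
          ∀ x y : ℝ, 0 < x → 0 < y →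
            x / (1 + k * y) - x * y = 0 → x * y ^ 2 - m * y + u = 0 →
              x = x₃ ∧ y = y₃) ∧
      (u₀ ≤ u →
        ∀ x y : ℝ, 0 < x → 0 < y →
          ¬(x / (1 + k * y) - x * y = 0 ∧ x * y ^ 2 - m * y + u = 0)) := by
  obtain ⟨hy₃pos, hy₃root⟩ : 0 < y₃ ∧ k * y₃ ^ 2 + y₃ - 1 = 0 :=
    pos_and_root_of_quadratic_formula hk hy₃
  have eq_y₃ : ∀ x y : ℝ, 0 < x → 0 < y → x / (1 + k * y) - x * y = 0 → y = y₃ := by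
    intro x y hx hy h
    rw [div_one_add_mul_sub_mul_eq_zero_iff hx.ne' (by positivity)] at h
    exact eq_of_pos_of_mul_sq_add_self_eq hk.le hy hy₃pos (by linarith)
  subst hu₀
  refine ⟨⟨by simp, by field_simp; ring⟩, fun hlt => ?_, fun hge x y hx hy ⟨h₁, h₂⟩ => ?_⟩
  · have hx₃y₃ : x₃ * y₃ ^ 2 = m * y₃ - u := by rw [hx₃]; field_simp
    refine ⟨hx₃ ▸ div_pos (by linarith) (by positivity), hy₃pos,
      (div_one_add_mul_sub_mul_eq_zero_iff ?_ (by positivity)).2 hy₃root, by linarith,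
      fun x y hx hy h₁ h₂ => ?_⟩
    · rw [hx₃]; exact div_ne_zero (by linarith) (by positivity)
    obtain rfl := eq_y₃ x y hx hy h₁
    exact ⟨mul_right_cancel₀ (by positivity : y ^ 2 ≠ 0) (by linarith), rfl⟩
  · obtain rfl := eq_y₃ x y hx hy h₁
    nlinarith [mul_pos hx (pow_pos hy 2)]

/-- Equilibria of `dx/dt = x/(1+ky) - xy`, `dy/dt = xy² - my + u`:
(i) `(0, u/m)` is always a solution; (ii) if `u < u₀ := m·y₃` there is exactly
one positive solution, namely `(x₃, y₃)`; (iii) if `u ≥ u₀` there is no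
positive solution. -/
theorem stmt5 (k m u : ℝ) (hk : 0 < k) (hm : 0 < m) (hu : 0 < u)
    (y₃ u₀ x₃ : ℝ)
    (hy₃ : y₃ = (Real.sqrt (1 + 4 * k) - 1) / (2 * k))
    (hu₀ : u₀ = m * y₃)
    (hx₃ : x₃ = (m * y₃ - u) / y₃ ^ 2) :
    ((0 : ℝ) / (1 + k * (u / m)) - 0 * (u / m) = 0 ∧
        0 * (u / m) ^ 2 - m * (u / m) + u = 0) ∧
      (u < u₀ →
        0 < x₃ ∧ 0 < y₃ ∧
          x₃ / (1 + k * y₃) - x₃ * y₃ = 0 ∧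
          x₃ * y₃ ^ 2 - m * y₃ + u = 0 ∧
          ∀ x y : ℝ, 0 < x → 0 < y →
            x / (1 + k * y) - x * y = 0 → x * y ^ 2 - m * y + u = 0 →
              x = x₃ ∧ y = y₃) ∧
      (u₀ ≤ u →
        ∀ x y : ℝ, 0 < x → 0 < y →
          ¬(x / (1 + k * y) - x * y = 0 ∧ x * y ^ 2 - m * y + u = 0)) :=
  stmt5_general k m u hk hm y₃ u₀ x₃ hy₃ hu₀ hx₃
end

section
/- Let k, m, u > 0, set y₂ = u/m, y₃ = (√(1+4k) − 1)/(2k) and u₀ = m·y₃. The Jacobian matrix of the vector field (x/(1+ky) − xy, xy² − my + u) at the boundary equilibrium (0, y₂) is the lower-triangular matrix [[1/(1+ky₂) − y₂, 0], [y₂², −m]], whose eigenvalues are λ₁ = 1/(1+ky₂) − y₂ and λ₂ = −m < 0. Moreover: if u < u₀ then λ₁ > 0; if u > u₀ then λ₁ < 0; and if u = u₀ then λ₁ = 0. -/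
/-!
At `x = 0` the field is `(x·g(y), x·y² − m y + u)` with `g(y) = 1/(1+ky) − y`, so its Jacobian at
`(0, y₂)` only sees the value `g(y₂)`, never `g'`. The threshold `y₃` is the positive root of
`k y² + y = 1`, which gives the factorisation `g(y) = (y₃ − y)(1 + k(y + y₃))/(1 + ky)`; for
`y ≥ 0` the second factor is positive, so `λ₁ = g(u/m)` has the sign of `y₃ − u/m`, that is of
`u₀ − u`.
-/

open ContinuousLinearMap

theorem hasFDerivAt_fst_mul_comp_snd_of_fst_eq_zero {g : ℝ → ℝ} {y : ℝ}
    (hg : DifferentiableAt ℝ g y) :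
    HasFDerivAt (fun p : ℝ × ℝ => p.1 * g p.2) (g y • fst ℝ ℝ ℝ) (0, y) := by
  have hsnd : HasFDerivAt (Prod.snd : ℝ × ℝ → ℝ) (snd ℝ ℝ ℝ) (0, y) := hasFDerivAt_snd
  simpa using hasFDerivAt_fst.fun_mul (hg.hasFDerivAt.comp (0, y) hsnd)

theorem fderiv_pesticideField_at_boundary (k m u y : ℝ) (hy : 1 + k * y ≠ 0) (v : ℝ × ℝ) :
    fderiv ℝ (fun p : ℝ × ℝ =>
          (p.1 / (1 + k * p.2) - p.1 * p.2, p.1 * p.2 ^ 2 - m * p.2 + u)) (0, y) v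
      = ((1 / (1 + k * y) - y) * v.1, y ^ 2 * v.1 + (-m) * v.2) := by
  have h₁ := hasFDerivAt_fst_mul_comp_snd_of_fst_eq_zero
    (g := fun z => 1 / (1 + k * z) - z) (y := y) (by fun_prop (disch := exact hy))
  have h₂ := (hasFDerivAt_fst_mul_comp_snd_of_fst_eq_zero (g := fun z => z ^ 2) (y := y)
    (differentiableAt_pow 2)).fun_add ((hasFDerivAt_snd.const_mul (-m)).const_add u)
  rw [show (fun p : ℝ × ℝ => (p.1 / (1 + k * p.2) - p.1 * p.2, p.1 * p.2 ^ 2 - m * p.2 + u)) =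
      fun p => (p.1 * (1 / (1 + k * p.2) - p.2), p.1 * p.2 ^ 2 + (u + -m * p.2)) by
    funext p; ext <;> ring, (h₁.prodMk h₂).fderiv]
  simp

noncomputable def criticalLevel (k : ℝ) : ℝ := (Real.sqrt (1 + 4 * k) - 1) / (2 * k)

theorem criticalLevel_pos {k : ℝ} (hk : 0 < k) : 0 < criticalLevel k := by
  have h : 1 < Real.sqrt (1 + 4 * k) := by
    rw [Real.lt_sqrt zero_le_one]; linarith
  exact div_pos (by linarith) (by positivity)

theorem mul_criticalLevel_sq_add_criticalLevel {k : ℝ} (hk : 0 < k) :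
    k * criticalLevel k ^ 2 + criticalLevel k = 1 := by
  have hs : Real.sqrt (1 + 4 * k) ^ 2 = 1 + 4 * k := Real.sq_sqrt (by linarith)
  unfold criticalLevel
  generalize Real.sqrt (1 + 4 * k) = s at hs
  field_simp
  linear_combination hs

theorem one_div_one_add_mul_sub_eq {k r y : ℝ} (hr : k * r ^ 2 + r = 1) (hy : 1 + k * y ≠ 0) :
    1 / (1 + k * y) - y = (r - y) * ((1 + k * (y + r)) / (1 + k * y)) := by
  field_simp
  linear_combination -hr

/-- At the boundary equilibrium `(0, y₂)` with `y₂ = u/m`, the Jacobian of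
the vector field `(x/(1+ky) - xy, xy² - my + u)` is the lower-triangular
matrix `[[1/(1+ky₂) - y₂, 0], [y₂², -m]]` with eigenvalues
`λ₁ = 1/(1+ky₂) - y₂` and `λ₂ = -m < 0`; moreover `λ₁ > 0` iff `u < u₀`,
`λ₁ < 0` iff `u > u₀`, and `λ₁ = 0` iff `u = u₀` (in the directions stated). -/
theorem stmt6 (k m u : ℝ) (hk : 0 < k) (hm : 0 < m) (hu : 0 < u)
    (y₂ y₃ u₀ : ℝ)
    (hy₂ : y₂ = u / m)
    (hy₃ : y₃ = (Real.sqrt (1 + 4 * k) - 1) / (2 * k))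
    (hu₀ : u₀ = m * y₃) :
    (∀ v : ℝ × ℝ,
        fderiv ℝ (fun p : ℝ × ℝ =>
          (p.1 / (1 + k * p.2) - p.1 * p.2,
            p.1 * p.2 ^ 2 - m * p.2 + u)) (0, y₂) v
          = ((1 / (1 + k * y₂) - y₂) * v.1,
              y₂ ^ 2 * v.1 + (-m) * v.2)) ∧
      -m < 0 ∧
      (u < u₀ → 0 < 1 / (1 + k * y₂) - y₂) ∧
      (u₀ < u → 1 / (1 + k * y₂) - y₂ < 0) ∧
      (u = u₀ → 1 / (1 + k * y₂) - y₂ = 0) := by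
  change y₃ = criticalLevel k at hy₃
  have hy₂_pos : 0 < y₂ := hy₂ ▸ div_pos hu hm
  have hden : 0 < 1 + k * y₂ := by positivity
  have hfactor : 0 < (1 + k * (y₂ + y₃)) / (1 + k * y₂) := by
    have hy₃_pos : 0 < y₃ := hy₃ ▸ criticalLevel_pos hk
    positivity
  have hlambda := one_div_one_add_mul_sub_eq (hy₃ ▸ mul_criticalLevel_sq_add_criticalLevel hk) hden.ne'
  have hu_lt_iff : u < u₀ ↔ y₂ < y₃ := by rw [hy₂, hu₀, div_lt_iff₀ hm, mul_comm]
  have hlt_u_iff : u₀ < u ↔ y₃ < y₂ := by rw [hy₂, hu₀, lt_div_iff₀ hm, mul_comm]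
  refine ⟨fderiv_pesticideField_at_boundary k m u y₂ hden.ne', neg_neg_of_pos hm, ?_, ?_, ?_⟩
  · intro h
    rw [hlambda]
    exact mul_pos (sub_pos.2 (hu_lt_iff.1 h)) hfactor
  · intro h
    rw [hlambda]
    exact mul_neg_of_neg_of_pos (sub_neg.2 (hlt_u_iff.1 h)) hfactor
  · intro h
    have : y₂ = y₃ := by rw [hy₂, h, hu₀, mul_div_cancel_left₀ _ hm.ne']
    rw [hlambda, this, sub_self, zero_mul]
end

section
/- Let k > 0, x₃ > 0, y₃ > 0 and set ω = √(x₃·(k·y₃² + 1)). Then the third focus value expression satisfies the identity and sign estimate: (π/(4y₃ω))·k²y₃³ − (π/(4y₃²ω²))·[ (2k²/ω)·x₃²·y₃⁴ + (k²/ω)·x₃·y₃⁴·(k·y₃² + 1) + 2ω·x₃ ] = −(π/(2ω))·( (k²/ω²)·x₃²·y₃² + x₃/y₃² ), and this quantity is strictly negative. -/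
/-! Since `ω² = x₃(ky₃² + 1)`, the term `(k²/ω)x₃y₃⁴(ky₃² + 1)` equals `k²y₃⁴ω`, and its
contribution cancels the first summand `(π/(4y₃ω))k²y₃³` exactly; what remains is a negative
multiple of a sum of positive terms. -/

theorem focus_value_eq {c k x y ω : ℝ} (hy : y ≠ 0) (hω : ω ≠ 0)
    (hω_sq : ω ^ 2 = x * (k * y ^ 2 + 1)) :
    c / (4 * y * ω) * (k ^ 2 * y ^ 3)
        - c / (4 * y ^ 2 * ω ^ 2) *
          (2 * k ^ 2 / ω * x ^ 2 * y ^ 4 + k ^ 2 / ω * x * y ^ 4 * (k * y ^ 2 + 1) + 2 * ω * x)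
      = -(c / (2 * ω)) * (k ^ 2 / ω ^ 2 * x ^ 2 * y ^ 2 + x / y ^ 2) := by
  field_simp
  linear_combination (2 * c * k ^ 2 * y ^ 4) * hω_sq

theorem neg_focus_value_neg {c k x y ω : ℝ} (hc : 0 < c) (hx : 0 < x) (hy : y ≠ 0)
    (hω : 0 < ω) :
    -(c / (2 * ω)) * (k ^ 2 / ω ^ 2 * x ^ 2 * y ^ 2 + x / y ^ 2) < 0 := by
  have hcoeff : 0 < c / (2 * ω) := by positivity
  have hbracket : 0 < k ^ 2 / ω ^ 2 * x ^ 2 * y ^ 2 + x / y ^ 2 := by positivity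
  nlinarith

/-- The third focus value identity and sign: with `ω = √(x₃(ky₃²+1))`,
`(π/(4y₃ω))k²y₃³ - (π/(4y₃²ω²))[(2k²/ω)x₃²y₃⁴ + (k²/ω)x₃y₃⁴(ky₃²+1) + 2ωx₃]
  = -(π/(2ω))((k²/ω²)x₃²y₃² + x₃/y₃²) < 0`. -/
theorem stmt10 (k x₃ y₃ : ℝ) (hk : 0 < k) (hx₃ : 0 < x₃) (hy₃ : 0 < y₃)
    (ω : ℝ) (hω : ω = Real.sqrt (x₃ * (k * y₃ ^ 2 + 1))) :
    Real.pi / (4 * y₃ * ω) * (k ^ 2 * y₃ ^ 3)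
        - Real.pi / (4 * y₃ ^ 2 * ω ^ 2) *
          (2 * k ^ 2 / ω * x₃ ^ 2 * y₃ ^ 4
            + k ^ 2 / ω * x₃ * y₃ ^ 4 * (k * y₃ ^ 2 + 1)
            + 2 * ω * x₃)
      = -(Real.pi / (2 * ω)) *
          (k ^ 2 / ω ^ 2 * x₃ ^ 2 * y₃ ^ 2 + x₃ / y₃ ^ 2) ∧
    -(Real.pi / (2 * ω)) *
        (k ^ 2 / ω ^ 2 * x₃ ^ 2 * y₃ ^ 2 + x₃ / y₃ ^ 2) < 0 := by
  have hrad : 0 < x₃ * (k * y₃ ^ 2 + 1) := by positivity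
  have hω_pos : 0 < ω := hω ▸ Real.sqrt_pos.mpr hrad
  have hω_sq : ω ^ 2 = x₃ * (k * y₃ ^ 2 + 1) := hω ▸ Real.sq_sqrt hrad.le
  exact ⟨focus_value_eq hy₃.ne' hω_pos.ne' hω_sq,
    neg_focus_value_neg Real.pi_pos hx₃ hy₃.ne' hω_pos⟩
end

section
/- Let k > 0 and y₃ = (√(1+4k) − 1)/(2k). Then k²·y₃⁴ < k·y₃² + 1; equivalently, k²·y₃⁴/(k·y₃² + 1) − 1 < 0. -/
/-- For `k > 0` and `y₃ = (√(1+4k) - 1)/(2k)`, one has `k²y₃⁴ < ky₃² + 1`;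
equivalently `k²y₃⁴/(ky₃² + 1) - 1 < 0`. -/
theorem stmt12 (k : ℝ) (hk : 0 < k) (y₃ : ℝ)
    (hy₃ : y₃ = (Real.sqrt (1 + 4 * k) - 1) / (2 * k)) :
    k ^ 2 * y₃ ^ 4 < k * y₃ ^ 2 + 1 ∧
      k ^ 2 * y₃ ^ 4 / (k * y₃ ^ 2 + 1) - 1 < 0 := by
  set s := Real.sqrt (1 + 4 * k) with hs
  have hpos : (0:ℝ) < 1 + 4 * k := by linarith
  have hs2 : s ^ 2 = 1 + 4 * k := Real.sq_sqrt hpos.le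
  have hs1 : 1 < s := by
    nlinarith [Real.sqrt_nonneg (1 + 4 * k)]
  have hslt : s < 1 + 2 * k := by
    nlinarith [Real.sqrt_nonneg (1 + 4 * k)]
  have hy0 : 0 < y₃ := by
    rw [hy₃]; exact div_pos (by linarith) (by linarith)
  have hy1 : y₃ < 1 := by
    rw [hy₃, div_lt_one (by linarith)]; linarith
  have hkey : k * y₃ ^ 2 = 1 - y₃ := by
    rw [hy₃]
    field_simp
    nlinarith
  have h1 : k ^ 2 * y₃ ^ 4 < k * y₃ ^ 2 + 1 := by
    have : k ^ 2 * y₃ ^ 4 = (1 - y₃) ^ 2 := by nlinarith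
    rw [this, hkey]; nlinarith
  refine ⟨h1, ?_⟩
  have hd : 0 < k * y₃ ^ 2 + 1 := by positivity
  rw [sub_neg, div_lt_one hd]
  exact h1
end
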